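/- Let ω ∈ Ω and let u ∈ X* be a word of length n. Then for every g ∈ L_{σⁿω} there exists h ∈ St_{L_ω}(u) such that the section h_u equals g. -/

import Mathlib

/-!  Common setup: the group `Aut(X*)` of automorphisms of the rooted binary tree,
the Grigorchuk generators `a, b_ω, c_ω, d_ω`, and the subgroups `G_ω`, `L_ω`. -/

/-- Finite words over `X = {0,1}`: vertices of the rooted binary tree. -/
abbrev Word := List Bool

/-- `Aut(X*)`: bijections of the set of words which preserve word length
(hence fix the empty word) and preserve the prefix relation, as a subgroup of the
permutation group of `Word`. -/
def TreeAut : Subgroup (Equiv.Perm Word) where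
  carrier := {g | (∀ w : Word, (g w).length = w.length) ∧
      ∀ u v : Word, u <+: v ↔ g u <+: g v}
  one_mem' := ⟨fun _ => rfl, fun _ _ => Iff.rfl⟩
  mul_mem' := by
    rintro g h ⟨hg1, hg2⟩ ⟨hh1, hh2⟩
    refine ⟨fun w => ?_, fun u v => ?_⟩
    · simpa using (hg1 (h w)).trans (hh1 w)
    · simpa using (hh2 u v).trans (hg2 (h u) (h v))
  inv_mem' := by
    rintro g ⟨hg1, hg2⟩
    refine ⟨fun w => ?_, fun u v => ?_⟩
    · have := hg1 (g⁻¹ w)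
      rw [← Equiv.Perm.mul_apply, mul_inv_cancel, Equiv.Perm.one_apply] at this
      exact this.symm
    · have := (hg2 (g⁻¹ u) (g⁻¹ v)).symm
      simpa using this

/-- Application of a tree automorphism to a word. -/
def ap (g : ↥TreeAut) (w : Word) : Word := (g : Equiv.Perm Word) w

/-- The root permutation `a` (as a map): `a(0v) = 1v`, `a(1v) = 0v`. -/
def aFun : Word → Word
  | [] => []
  | x :: v => (!x) :: v

/-- The common recursive pattern of the maps `b_ω, c_ω, d_ω`: on `0v` act by the
identity if `ω 0 = k` and by `a` otherwise, on `1v` recurse with the shifted sequence.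
(`k = 2` gives `b`, `k = 1` gives `c`, `k = 0` gives `d`.) -/
def genFun (k : Fin 3) : (ℕ → Fin 3) → Word → Word
  | _, [] => []
  | ω, false :: v => false :: (if ω 0 = k then v else aFun v)
  | ω, true :: v => true :: genFun k (fun n => ω (n + 1)) v

lemma aFun_invol : Function.Involutive aFun := by
  intro w; cases w with
  | nil => rfl
  | cons x v => simp [aFun]

lemma aFun_length : ∀ w : Word, (aFun w).length = w.length := by
  intro w; cases w <;> simp [aFun]

lemma aFun_prefix : ∀ u v : Word, u <+: v → aFun u <+: aFun v := by
  intro u v h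
  cases u with
  | nil => simp [aFun]
  | cons x u' =>
    cases v with
    | nil => simp at h
    | cons y v' =>
      rw [List.cons_prefix_cons] at h
      obtain ⟨rfl, h2⟩ := h
      simpa [aFun, List.cons_prefix_cons] using h2

lemma genFun_length (k : Fin 3) : ∀ (w : Word) (ω : ℕ → Fin 3),
    (genFun k ω w).length = w.length
  | [], _ => rfl
  | false :: v, ω => by
    by_cases h : ω 0 = k <;> simp [genFun, h, aFun_length]
  | true :: v, ω => by
    simp [genFun, genFun_length k v]

lemma genFun_invol (k : Fin 3) : ∀ (w : Word) (ω : ℕ → Fin 3),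
    genFun k ω (genFun k ω w) = w
  | [], _ => rfl
  | false :: v, ω => by
    by_cases h : ω 0 = k <;> simp [genFun, h, aFun_invol v]
  | true :: v, ω => by
    simp [genFun, genFun_invol k v]

lemma genFun_prefix (k : Fin 3) : ∀ (u v : Word) (ω : ℕ → Fin 3),
    u <+: v → genFun k ω u <+: genFun k ω v
  | [], v, ω, _ => by simp [genFun]
  | x :: u', [], ω, h => by simp at h
  | x :: u', y :: v', ω, h => by
    rw [List.cons_prefix_cons] at h
    obtain ⟨rfl, h2⟩ := h
    cases x with
    | false =>
      by_cases h0 : ω 0 = k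
      · simpa [genFun, h0, List.cons_prefix_cons] using h2
      · simpa [genFun, h0, List.cons_prefix_cons] using aFun_prefix u' v' h2
    | true =>
      simpa [genFun, List.cons_prefix_cons] using genFun_prefix k u' v' _ h2

/-- Build an element of `Aut(X*)` from an involutive, length-preserving,
prefix-preserving map. -/
def mkAut (f : Word → Word) (hinv : Function.Involutive f)
    (hlen : ∀ w, (f w).length = w.length)
    (hpre : ∀ u v : Word, u <+: v → f u <+: f v) : ↥TreeAut :=
  ⟨hinv.toPerm, by
    refine ⟨fun w => ?_, fun u v => ⟨fun h => ?_, fun h => ?_⟩⟩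
    · simpa using hlen w
    · simpa using hpre u v h
    · have := hpre _ _ (by simpa using h)
      simpa [hinv u, hinv v] using this⟩

/-- The automorphism `a`. -/
def aAut : ↥TreeAut := mkAut aFun aFun_invol aFun_length aFun_prefix

/-- The automorphism `b_ω`. -/
def bAut (ω : ℕ → Fin 3) : ↥TreeAut :=
  mkAut (genFun 2 ω) (fun w => genFun_invol 2 w ω) (fun w => genFun_length 2 w ω)
    (fun u v h => genFun_prefix 2 u v ω h)

/-- The automorphism `c_ω`. -/
def cAut (ω : ℕ → Fin 3) : ↥TreeAut :=
  mkAut (genFun 1 ω) (fun w => genFun_invol 1 w ω) (fun w => genFun_length 1 w ω)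
    (fun u v h => genFun_prefix 1 u v ω h)

/-- The automorphism `d_ω`. -/
def dAut (ω : ℕ → Fin 3) : ↥TreeAut :=
  mkAut (genFun 0 ω) (fun w => genFun_invol 0 w ω) (fun w => genFun_length 0 w ω)
    (fun u v h => genFun_prefix 0 u v ω h)

/-- `G_ω = ⟨a, b_ω, c_ω, d_ω⟩`. -/
def Ggrp (ω : ℕ → Fin 3) : Subgroup ↥TreeAut :=
  Subgroup.closure {aAut, bAut ω, cAut ω, dAut ω}

/-- `L_ω = ⟨a b_ω, d_ω⟩`. -/
def Lgrp (ω : ℕ → Fin 3) : Subgroup ↥TreeAut :=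
  Subgroup.closure {aAut * bAut ω, dAut ω}

/-- The `n`-fold shift `σⁿω`. -/
def shift (n : ℕ) (ω : ℕ → Fin 3) : ℕ → Fin 3 := fun m => ω (m + n)

/-- `Ω_∞`: sequences in which each of `0, 1, 2` occurs infinitely often. -/
def OmegaInf : Set (ℕ → Fin 3) := {ω | ∀ k : Fin 3, ∀ N : ℕ, ∃ n, N ≤ n ∧ ω n = k}

/-- `g` fixes every word of length `n`. -/
def fixesLevel (g : ↥TreeAut) (n : ℕ) : Prop := ∀ w : Word, w.length = n → ap g w = w

/-- The subgroup of all tree automorphisms acting trivially outside the subtree `uX*`. -/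
def ristSubgroup (u : Word) : Subgroup ↥TreeAut where
  carrier := {g | ∀ w : Word, ¬ u <+: w → ap g w = w}
  one_mem' := by intro w _; rfl
  mul_mem' := by
    intro g h hg hh w hw
    have e1 : ap g w = w := hg w hw
    have e2 : ap h w = w := hh w hw
    simp only [ap] at e1 e2
    show (g : Equiv.Perm Word) ((h : Equiv.Perm Word) w) = w
    rw [e2, e1]
  inv_mem' := by
    intro g hg w hw
    have h1' : ap g w = w := hg w hw
    have h1 : (g : Equiv.Perm Word) w = w := h1'
    show ((g : Equiv.Perm Word))⁻¹ w = w
    conv_lhs => rw [← h1]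
    simp

/-- The subgroup of all tree automorphisms fixing every word of length `n`
(the `n`-th level stabilizer in `Aut(X*)`). -/
def levelStab (n : ℕ) : Subgroup ↥TreeAut where
  carrier := {g | fixesLevel g n}
  one_mem' := by intro w _; rfl
  mul_mem' := by
    intro g h hg hh w hw
    have e1 : ap g w = w := hg w hw
    have e2 : ap h w = w := hh w hw
    simp only [ap] at e1 e2
    show (g : Equiv.Perm Word) ((h : Equiv.Perm Word) w) = w
    rw [e2, e1]
  inv_mem' := by
    intro g hg w hw
    have h1' : ap g w = w := hg w hw
    have h1 : (g : Equiv.Perm Word) w = w := h1'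
    show ((g : Equiv.Perm Word))⁻¹ w = w
    conv_lhs => rw [← h1]
    simp

/-- The rigid level stabilizer `Rist_G(n)`: the subgroup generated by the rigid vertex
stabilizers `Rist_G(u) = G ⊓ ristSubgroup u` over all words `u` of length `n`. -/
def ristLevel (G : Subgroup ↥TreeAut) (n : ℕ) : Subgroup ↥TreeAut :=
  ⨆ u ∈ {u : Word | u.length = n}, G ⊓ ristSubgroup u

/-- `G` acts transitively on each level of the tree. -/
def LevelTransitive (G : Subgroup ↥TreeAut) : Prop :=
  ∀ u v : Word, u.length = v.length → ∃ g ∈ G, ap g u = v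

/-- A set of tree automorphisms acts level transitively on the subtree `vX*`. -/
def LevelTransitiveOn (S : Set ↥TreeAut) (v : Word) : Prop :=
  ∀ u₁ u₂ : Word, u₁.length = u₂.length → ∃ g ∈ S, ap g (v ++ u₁) = v ++ u₂

/-- `L_{n,ω}`: `L_{0,ω} = L_ω` and `L_{n,ω}` is generated by the squares of
elements of `L_{n-1,ω}`. -/
def Lsq (ω : ℕ → Fin 3) : ℕ → Subgroup ↥TreeAut
  | 0 => Lgrp ω
  | n + 1 => Subgroup.closure {x | ∃ y ∈ Lsq ω n, x = y * y}

/-- `g` is active at the word `v`: the section `g_v` acts nontrivially on the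
one-letter words. -/
def IsActive (g : ↥TreeAut) (v : Word) : Prop :=
  ap g (v ++ [false]) ≠ ap g v ++ [false]

open scoped Classical in
/-- `p(g)_n`: the number of words of length `n` at which `g` is active, mod 2
(words of length `n` are enumerated as `List.ofFn f` for `f : Fin n → Bool`). -/
noncomputable def pMap (g : ↥TreeAut) (n : ℕ) : ZMod 2 :=
  (((Finset.univ : Finset (Fin n → Bool)).filter
    (fun f => IsActive g (List.ofFn f))).card : ZMod 2)

/-! The section map `h ↦ h_x` at a first letter `x` carries `L_ω` onto a group containing the
generators `a b_{σω}` and `d_{σω}` of `L_{σω}`; iterating along the letters of `u` gives the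
claim. Writing `T = a b_ω`, `b = b_ω`, `b' = b_{σω}`, `β = β(ω₁)`, `δ = δ(ω₁)`, the relevant
elements of `L_ω` decompose as `T² = (b' β, β b')`, `d_ω = (δ, d_{σω})` and
`T d_ω T⁻¹ = (b' d_{σω} b', β δ β) = (d_{σω}, δ)`, the last because `b'` and `d_{σω}` (resp.
`β` and `δ`) are commuting involutions. When `ω₁ = 2` we have `β = e`, `δ = a`, and otherwise
`β = a`; in either case `a b'` is a product of these sections. -/

@[simp]
lemma ap_mul (g h : ↥TreeAut) (w : Word) : ap (g * h) w = ap g (ap h w) := rfl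

lemma ap_inv_ap (g : ↥TreeAut) (w : Word) : ap g⁻¹ (ap g w) = w :=
  Equiv.symm_apply_apply _ _

lemma ap_ap_inv (g : ↥TreeAut) (w : Word) : ap g (ap g⁻¹ w) = w :=
  Equiv.apply_symm_apply _ _

@[simp]
lemma ap_nil (g : ↥TreeAut) : ap g [] = [] :=
  List.length_eq_zero_iff.mp (g.2.1 [])

/-- `{h_u | h ∈ St_G(u)}`. -/
def sectionSubgroup (G : Subgroup ↥TreeAut) (u : Word) : Subgroup ↥TreeAut where
  carrier := {g | ∃ h ∈ G, ∀ v : Word, ap h (u ++ v) = u ++ ap g v}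
  one_mem' := ⟨1, G.one_mem, fun _ => rfl⟩
  mul_mem' := by
    rintro g₁ g₂ ⟨h₁, hh₁, e₁⟩ ⟨h₂, hh₂, e₂⟩
    exact ⟨h₁ * h₂, G.mul_mem hh₁ hh₂, fun v => by rw [ap_mul, e₂, e₁, ap_mul]⟩
  inv_mem' := by
    rintro g ⟨h, hh, e⟩
    refine ⟨h⁻¹, G.inv_mem hh, fun v => ?_⟩
    rw [← ap_ap_inv g v, ← e, ap_inv_ap, ap_ap_inv]

lemma sectionSubgroup_append {G H : Subgroup ↥TreeAut} {u w : Word}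
    (hH : H ≤ sectionSubgroup G u) : sectionSubgroup H w ≤ sectionSubgroup G (u ++ w) := by
  rintro g ⟨h', hh', e'⟩
  obtain ⟨h, hh, e⟩ := hH hh'
  exact ⟨h, hh, fun v => by rw [List.append_assoc, e, e', List.append_assoc]⟩

lemma mkAut_inv (f : Word → Word) (hinv : Function.Involutive f)
    (hlen : ∀ w, (f w).length = w.length) (hpre : ∀ u v : Word, u <+: v → f u <+: f v) :
    (mkAut f hinv hlen hpre)⁻¹ = mkAut f hinv hlen hpre :=
  inv_eq_of_mul_eq_one_right <| Subtype.ext <| Equiv.ext hinv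

@[simp]
lemma ap_aAut (w : Word) : ap aAut w = aFun w := rfl

@[simp]
lemma ap_bAut (ω : ℕ → Fin 3) (w : Word) : ap (bAut ω) w = genFun 2 ω w := rfl

@[simp]
lemma ap_dAut (ω : ℕ → Fin 3) (w : Word) : ap (dAut ω) w = genFun 0 ω w := rfl

@[simp]
lemma aAut_inv : aAut⁻¹ = aAut := mkAut_inv ..

@[simp]
lemma bAut_inv (ω : ℕ → Fin 3) : (bAut ω)⁻¹ = bAut ω := mkAut_inv ..

@[simp]
lemma aFun_cons (x : Bool) (v : Word) : aFun (x :: v) = (!x) :: v := rfl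

@[simp]
lemma genFun_false_cons (k : Fin 3) (ω : ℕ → Fin 3) (v : Word) :
    genFun k ω (false :: v) = false :: if ω 0 = k then v else aFun v := rfl

@[simp]
lemma genFun_true_cons (k : Fin 3) (ω : ℕ → Fin 3) (v : Word) :
    genFun k ω (true :: v) = true :: genFun k (shift 1 ω) v := rfl

lemma genFun_comm (j k : Fin 3) : ∀ (v : Word) (ω : ℕ → Fin 3),
    genFun j ω (genFun k ω v) = genFun k ω (genFun j ω v)
  | [], _ => rfl
  | false :: v, ω => by
    by_cases hj : ω 0 = j <;> by_cases hk : ω 0 = k <;> simp [hj, hk]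
  | true :: v, ω => by
    simp [genFun_comm j k v]

lemma genFun_conj_genFun (j k : Fin 3) (ω : ℕ → Fin 3) (v : Word) :
    genFun j ω (genFun k ω (genFun j ω v)) = genFun k ω v := by
  rw [genFun_comm k j, genFun_invol]

section LevelOne

variable (ω : ℕ → Fin 3)

lemma aAut_mul_bAut_mem_Lgrp : aAut * bAut ω ∈ Lgrp ω :=
  Subgroup.subset_closure (Set.mem_insert _ _)

lemma dAut_mem_Lgrp : dAut ω ∈ Lgrp ω :=
  Subgroup.subset_closure (Set.mem_insert_of_mem _ rfl)

lemma aAut_mul_bAut_shift_mem_sectionSubgroup (x : Bool) :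
    aAut * bAut (shift 1 ω) ∈ sectionSubgroup (Lgrp ω) [x] := by
  have hT := aAut_mul_bAut_mem_Lgrp ω
  have hTd := mul_mem (mul_mem hT (dAut_mem_Lgrp ω)) (inv_mem hT)
  by_cases h2 : ω 0 = 2 <;> cases x
  · refine ⟨dAut ω * (aAut * bAut ω * (aAut * bAut ω)),
      mul_mem (dAut_mem_Lgrp ω) (mul_mem hT hT), fun v => ?_⟩
    simp [h2]
  · refine ⟨aAut * bAut ω * dAut ω * (aAut * bAut ω)⁻¹ * (aAut * bAut ω * (aAut * bAut ω)),
      mul_mem hTd (mul_mem hT hT), fun v => ?_⟩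
    simp [h2]
  · refine ⟨(aAut * bAut ω * (aAut * bAut ω))⁻¹, inv_mem (mul_mem hT hT), fun v => ?_⟩
    simp [h2]
  · refine ⟨aAut * bAut ω * (aAut * bAut ω), mul_mem hT hT, fun v => ?_⟩
    simp [h2]

lemma dAut_shift_mem_sectionSubgroup (x : Bool) :
    dAut (shift 1 ω) ∈ sectionSubgroup (Lgrp ω) [x] := by
  have hT := aAut_mul_bAut_mem_Lgrp ω
  cases x
  · refine ⟨aAut * bAut ω * dAut ω * (aAut * bAut ω)⁻¹,
      mul_mem (mul_mem hT (dAut_mem_Lgrp ω)) (inv_mem hT), fun v => ?_⟩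
    simp [genFun_conj_genFun]
  · exact ⟨dAut ω, dAut_mem_Lgrp ω, fun v => rfl⟩

lemma Lgrp_shift_one_le_sectionSubgroup (x : Bool) :
    Lgrp (shift 1 ω) ≤ sectionSubgroup (Lgrp ω) [x] := by
  rw [Lgrp, Subgroup.closure_le]
  rintro g (rfl | rfl)
  · exact aAut_mul_bAut_shift_mem_sectionSubgroup ω x
  · exact dAut_shift_mem_sectionSubgroup ω x

end LevelOne

lemma Lgrp_shift_length_le_sectionSubgroup (u : Word) :
    ∀ ω : ℕ → Fin 3, Lgrp (shift u.length ω) ≤ sectionSubgroup (Lgrp ω) u := by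
  induction u with
  | nil => exact fun ω g hg => ⟨g, hg, fun _ => rfl⟩
  | cons x u ih =>
    exact fun ω => (ih (shift 1 ω)).trans
      (sectionSubgroup_append (Lgrp_shift_one_le_sectionSubgroup ω x))

/-- for every `ω ∈ Ω`, every word `u` of length `n` and every
`g ∈ L_{σⁿω}`, there is `h ∈ St_{L_ω}(u)` whose section at `u` equals `g`
(i.e. `h u = u` and `h (u ++ v) = u ++ g v` for all `v`). -/
theorem statement2 (ω : ℕ → Fin 3) (n : ℕ) (u : Word) (hu : u.length = n)
    (g : ↥TreeAut) (hg : g ∈ Lgrp (shift n ω)) :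
    ∃ h ∈ Lgrp ω, ap h u = u ∧ ∀ v : Word, ap h (u ++ v) = u ++ ap g v := by
  subst hu
  obtain ⟨h, hh, e⟩ := Lgrp_shift_length_le_sectionSubgroup u ω hg
  refine ⟨h, hh, ?_, e⟩
  simpa using e []
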